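/- Let (X,d,μ) be a doubling metric measure space that is uniformly b-connected for some b ≤ 1/4, fix a basepoint x₀ ∈ X and set φ(t) = inf{r > 0 : μ(B(x₀,r)) ≥ t}. Suppose X satisfies the strong isoperimetric inequality: there is C ≥ 1 such that μ(∂_2 A) ≥ C⁻¹ μ(A)/φ(C μ(A)) for every measurable A ⊆ X of finite positive measure. Then balls are asymptotically isoperimetric: there exist constants C₁, C₂ > 0 such that for every t > 0, inf{μ(∂_2 B(x,r)) : x ∈ X, r > 0, μ(B(x,r)) ≥ t} ≤ C₁ I_2(C₂ t), where I_2 is the 2-profile of X. -/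

import Mathlib

open Metric MeasureTheory Set ENNReal NNReal

noncomputable section

/-- The closed `h`-neighborhood `A_h = {x : d(x,A) ≤ h}` of a set `A`. -/
def nbhd {X : Type*} [MetricSpace X] (A : Set X) (h : ℝ) : Set X :=
  {x | Metric.infDist x A ≤ h}

/-- The `h`-boundary `∂_h A = A_h ∩ (Aᶜ)_h` of a set `A`. -/
def hBdry {X : Type*} [MetricSpace X] (A : Set X) (h : ℝ) : Set X := nbhd A h ∩ nbhd Aᶜ h

/-- There is a `b`-chain from `x` to `y` entirely contained in `S`. -/
def ChainIn {X : Type*} [MetricSpace X] (b : ℝ) (S : Set X) (x y : X) : Prop :=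
  ∃ (n : ℕ) (c : ℕ → X), c 0 = x ∧ c n = y ∧ (∀ i < n, dist (c i) (c (i + 1)) ≤ b) ∧
    ∀ i ≤ n, c i ∈ S

/-- `X` is uniformly `b`-connected. -/
def UnifConn (X : Type*) [MetricSpace X] (b : ℝ) : Prop :=
  ∀ E₁ > (0 : ℝ), ∃ E₂ ≥ E₁, ∀ x y : X, dist x y ≤ E₁ → ChainIn b (Metric.ball x E₂) x y

/-- `μ` is doubling: `μ(B(x,2r)) ≤ C μ(B(x,r))` for all `x` and all `r > 0`. -/
def DoublingMeasure' {X : Type*} [MetricSpace X] [MeasurableSpace X] (μ : Measure X) : Prop :=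
  ∃ C : ℝ≥0, 0 < C ∧ ∀ (x : X) (r : ℝ), 0 < r →
    μ (Metric.ball x (2 * r)) ≤ (C : ℝ≥0∞) * μ (Metric.ball x r)

/-- The `h`-profile `I_h(t) = inf {μ(∂_h A) : A measurable, μ A < ∞, μ A ≥ t}`. -/
def profile {X : Type*} [MetricSpace X] [MeasurableSpace X]
    (μ : Measure X) (h : ℝ) (t : ℝ≥0∞) : ℝ≥0∞ :=
  ⨅ (A : Set X) (_ : MeasurableSet A) (_ : μ A ≠ ∞) (_ : t ≤ μ A), μ (hBdry A h)

/-- `φ(t) = inf {r > 0 : μ(B(x₀,r)) ≥ t}`, the right inverse of the growth function. -/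
def phi {X : Type*} [MetricSpace X] [MeasurableSpace X]
    (μ : Measure X) (x₀ : X) (t : ℝ≥0∞) : ℝ :=
  sInf {r : ℝ | 0 < r ∧ t ≤ μ (Metric.ball x₀ r)}

namespace IsoPf

variable {X : Type*} [MetricSpace X]

lemma mem_hBdry {A : Set X} {h : ℝ} {z : X} :
    z ∈ hBdry A h ↔ Metric.infDist z A ≤ h ∧ Metric.infDist z Aᶜ ≤ h := Iff.rfl

/-- Outer bound for the 2-neighborhood of a ball. -/
lemma nbhd_ball_sub (p : X) {ρ : ℝ} (hρ : 0 < ρ) :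
    nbhd (ball p ρ) 2 ⊆ closedBall p (ρ + 2) := by
  intro z hz
  have hz' : infDist z (ball p ρ) ≤ 2 := hz
  rw [mem_closedBall, dist_comm]
  by_contra hlt
  push_neg at hlt
  have h2 : infDist z (ball p ρ) < dist p z - ρ := lt_of_le_of_lt hz' (by linarith)
  obtain ⟨w, hw, hdw⟩ := (infDist_lt_iff ⟨p, mem_ball_self hρ⟩).1 h2
  rw [mem_ball] at hw
  have h3 := dist_triangle p w z
  have h4 : dist p w = dist w p := dist_comm _ _
  have h5 : dist w z = dist z w := dist_comm _ _
  linarith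

/-- Inner bound for the 2-boundary of a ball (needs a point outside the ball). -/
lemma bdry_ball_lower {p w z : X} {ρ : ℝ} (hw : ρ ≤ dist p w)
    (hz : z ∈ hBdry (ball p ρ) 2) : ρ - 2 ≤ dist p z := by
  have hz' : infDist z (ball p ρ)ᶜ ≤ 2 := hz.2
  by_contra hlt
  push_neg at hlt
  have hwmem : w ∈ (ball p ρ)ᶜ := by
    simp only [mem_compl_iff, mem_ball, not_lt]
    rw [dist_comm]; exact hw
  have h2 : infDist z (ball p ρ)ᶜ < ρ - dist p z := lt_of_le_of_lt hz' (by linarith)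
  obtain ⟨u, hu, hdu⟩ := (infDist_lt_iff ⟨w, hwmem⟩).1 h2
  simp only [mem_compl_iff, mem_ball, not_lt] at hu
  have h3 := dist_triangle p z u
  have h4 : dist z u = dist z u := rfl
  rw [dist_comm] at hu
  linarith

/-- Chain crossing: along a `b`-chain from a point of `A` to a point at `infDist > 1 + b`,
some chain point has `infDist` in `(1, 1+b]`. -/
lemma crossing {A S : Set X} {b : ℝ} (hb : 0 < b) {p w : X}
    (hp : p ∈ A) (hw : 1 + b < infDist w A) (hch : ChainIn b S p w) :
    ∃ y ∈ S, 1 < infDist y A ∧ infDist y A ≤ 1 + b := by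
  classical
  obtain ⟨n, c, h0, hn, hstep, hmem⟩ := hch
  have hPn : 1 < infDist (c n) A := by rw [hn]; linarith
  have hex : ∃ k, 1 < infDist (c k) A := ⟨n, hPn⟩
  set i := Nat.find hex with hidef
  have hi : 1 < infDist (c i) A := Nat.find_spec hex
  have hile : i ≤ n := Nat.find_min' hex hPn
  have hi0 : i ≠ 0 := by
    intro h
    rw [h, h0, infDist_zero_of_mem hp] at hi
    linarith
  obtain ⟨j, hj⟩ := Nat.exists_eq_succ_of_ne_zero hi0
  have hnot : ¬ 1 < infDist (c j) A := Nat.find_min hex (by omega)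
  push_neg at hnot
  have hd : dist (c j) (c (j + 1)) ≤ b := hstep j (by omega)
  have htri : infDist (c (j+1)) A ≤ infDist (c j) A + dist (c (j+1)) (c j) :=
    infDist_le_infDist_add_dist
  rw [dist_comm] at htri
  refine ⟨c i, hmem i hile, hi, ?_⟩
  rw [hj]
  linarith

/-- A half-ball around a crossing point sits inside the 2-boundary. -/
lemma ball_sub_bdry {A : Set X} {y : X} (h1 : 1 < infDist y A)
    (h2 : infDist y A ≤ 3 / 2) : ball y (1 / 2) ⊆ hBdry A 2 := by
  intro z hz
  rw [mem_ball] at hz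
  rw [mem_hBdry]
  constructor
  · have htri : infDist z A ≤ infDist y A + dist z y := infDist_le_infDist_add_dist
    linarith
  · have hzA : z ∈ Aᶜ := by
      intro hzA
      have h3 : infDist y A ≤ dist y z := infDist_le_dist_of_mem hzA
      rw [dist_comm] at h3
      linarith
    rw [infDist_zero_of_mem hzA]
    norm_num

/-- If every point of `A` is "saturated", then every point of `X` is within `5/4` of `A`. -/
lemma bad_global {A : Set X} {b : ℝ} (hb : 0 < b) (hb4 : b ≤ 1 / 4)
    (hconn : UnifConn X b) (hA : A.Nonempty)
    (hbad : ∀ p ∈ A, ∀ w : X, dist p w ≤ 6 → infDist w A ≤ 5 / 4) :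
    ∀ z : X, infDist z A ≤ 5 / 4 := by
  obtain ⟨a₀, ha₀⟩ := hA
  intro z
  obtain ⟨E₂, hE₂, hch⟩ := hconn (max 1 (dist a₀ z)) (lt_of_lt_of_le one_pos (le_max_left _ _))
  obtain ⟨n, c, h0, hn, hstep, hmem⟩ := hch a₀ z (le_max_right _ _)
  suffices h : ∀ i, i ≤ n → infDist (c i) A ≤ 5 / 4 by
    rw [← hn]; exact h n le_rfl
  intro i
  induction i with
  | zero =>
    intro _
    rw [h0, infDist_zero_of_mem ha₀]
    norm_num
  | succ i ih =>
    intro hin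
    have h1 : infDist (c i) A ≤ 5 / 4 := ih (by omega)
    have h2 : infDist (c (i + 1)) A ≤ infDist (c i) A + dist (c (i + 1)) (c i) :=
      infDist_le_infDist_add_dist
    have h3 : dist (c i) (c (i + 1)) ≤ b := hstep i (by omega)
    rw [dist_comm] at h3
    have h4 : infDist (c (i + 1)) A ≤ 3 / 2 := by linarith
    obtain ⟨a, haA, hda⟩ := (infDist_lt_iff ⟨a₀, ha₀⟩).1
      (lt_of_le_of_lt h4 (by norm_num : (3 : ℝ) / 2 < 2))
    refine hbad a haA (c (i + 1)) ?_
    rw [dist_comm] at hda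
    linarith

section Doubling

variable [MeasurableSpace X] {μ : Measure X} {D : ℝ≥0}

lemma dbl_pow (hdbl : ∀ (x : X) (r : ℝ), 0 < r → μ (ball x (2 * r)) ≤ (D : ℝ≥0∞) * μ (ball x r))
    (x : X) {r : ℝ} (hr : 0 < r) : ∀ n : ℕ, μ (ball x (2 ^ n * r)) ≤ (D : ℝ≥0∞) ^ n * μ (ball x r)
  | 0 => by simp
  | n + 1 => by
    have heq : (2 : ℝ) ^ (n + 1) * r = 2 * (2 ^ n * r) := by ring
    have h1 : μ (ball x (2 ^ (n + 1) * r)) ≤ (D : ℝ≥0∞) * μ (ball x (2 ^ n * r)) := by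
      rw [heq]; exact hdbl x _ (by positivity)
    calc μ (ball x (2 ^ (n + 1) * r)) ≤ (D : ℝ≥0∞) * μ (ball x (2 ^ n * r)) := h1
    _ ≤ (D : ℝ≥0∞) * ((D : ℝ≥0∞) ^ n * μ (ball x r)) :=
        mul_le_mul_right (dbl_pow hdbl x hr n) _
    _ = (D : ℝ≥0∞) ^ (n + 1) * μ (ball x r) := by rw [pow_succ]; ring

lemma dbl_cmp (hdbl : ∀ (x : X) (r : ℝ), 0 < r → μ (ball x (2 * r)) ≤ (D : ℝ≥0∞) * μ (ball x r))
    (x : X) {r s : ℝ} (hr : 0 < r) (n : ℕ) (hs : s ≤ 2 ^ n * r) :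
    μ (ball x s) ≤ (D : ℝ≥0∞) ^ n * μ (ball x r) :=
  le_trans (measure_mono (ball_subset_ball hs)) (dbl_pow hdbl x hr n)

end Doubling

lemma le_mul_iInf {ι : Sort*} {a x : ℝ≥0∞} (ha0 : a ≠ 0) (hat : a ≠ ⊤) {f : ι → ℝ≥0∞}
    (h : ∀ i, x ≤ a * f i) : x ≤ a * ⨅ i, f i := by
  have h1 : a⁻¹ * x ≤ ⨅ i, f i := le_iInf fun i => by
    calc a⁻¹ * x ≤ a⁻¹ * (a * f i) := mul_le_mul_right (h i) _
    _ = f i := by rw [← mul_assoc, ENNReal.inv_mul_cancel ha0 hat, one_mul]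
  calc x = a * (a⁻¹ * x) := by rw [← mul_assoc, ENNReal.mul_inv_cancel ha0 hat, one_mul]
  _ ≤ a * ⨅ i, f i := mul_le_mul_right h1 _

end IsoPf

set_option maxHeartbeats 1000000 in
theorem strong_profile_implies_balls_isoperimetric
    {X : Type*} [MetricSpace X] [MeasurableSpace X] [BorelSpace X]
    (μ : Measure X) [SigmaFinite μ] (hD : DoublingMeasure' μ)
    (b : ℝ) (hb : 0 < b) (hb4 : b ≤ 1 / 4) (hconn : UnifConn X b)
    (x₀ : X) (C : ℝ≥0) (hC : 1 ≤ C)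
    (hstrong : ∀ A : Set X, MeasurableSet A → μ A ≠ ∞ → 0 < μ A →
      (C : ℝ≥0∞)⁻¹ * (μ A / ENNReal.ofReal (phi μ x₀ ((C : ℝ≥0∞) * μ A))) ≤
        μ (hBdry A 2)) :
    ∃ C₁ C₂ : ℝ≥0, 0 < C₁ ∧ 0 < C₂ ∧ ∀ t : ℝ≥0∞, 0 < t →
      (⨅ (x : X) (r : ℝ) (_ : 0 < r) (_ : t ≤ μ (Metric.ball x r)),
          μ (hBdry (Metric.ball x r) 2)) ≤
        (C₁ : ℝ≥0∞) * profile μ 2 ((C₂ : ℝ≥0∞) * t) := by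
  classical
  obtain ⟨D₀, hD₀, hdbl₀⟩ := hD
  set D : ℝ≥0 := max D₀ 1 with hDdef
  have hD1 : (1 : ℝ≥0) ≤ D := le_max_right _ _
  have hDpos : (0 : ℝ≥0) < D := lt_of_lt_of_le one_pos hD1
  have hdbl : ∀ (x : X) (r : ℝ), 0 < r →
      μ (ball x (2 * r)) ≤ (D : ℝ≥0∞) * μ (ball x r) := fun x r hr =>
    (hdbl₀ x r hr).trans (mul_le_mul_left (by exact_mod_cast le_max_left D₀ 1) _)
  obtain ⟨E₂, hE₂6, hchain6⟩ := hconn 6 (by norm_num)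
  obtain ⟨c₁, hc₁⟩ := pow_unbounded_of_one_lt (2 * E₂ + 18) (by norm_num : (1 : ℝ) < 2)
  set C₁ : ℝ≥0 := 20 * C ^ 2 + 200 * C + 1 + D ^ (c₁ + 1) with hC₁def
  set C₂ : ℝ≥0 := D ^ 2 with hC₂def
  have hC₁pos : 0 < C₁ := by rw [hC₁def]; positivity
  have hC₂pos : 0 < C₂ := by rw [hC₂def]; positivity
  have hC₁0 : (C₁ : ℝ≥0∞) ≠ 0 := by exact_mod_cast hC₁pos.ne'
  have hC₁top : (C₁ : ℝ≥0∞) ≠ ⊤ := coe_ne_top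
  have hCne0 : (C : ℝ≥0∞) ≠ 0 := by exact_mod_cast (lt_of_lt_of_le one_pos hC).ne'
  have hCnetop : (C : ℝ≥0∞) ≠ ⊤ := coe_ne_top
  have hC1le : (1 : ℝ≥0∞) ≤ (C : ℝ≥0∞) := by exact_mod_cast hC
  have hC₂1le : (1 : ℝ≥0∞) ≤ (C₂ : ℝ≥0∞) := by
    rw [hC₂def]
    exact_mod_cast one_le_pow₀ hD1
  have hc₁coe : (C₁ : ℝ≥0∞) =
      20 * (C : ℝ≥0∞) ^ 2 + 200 * (C : ℝ≥0∞) + 1 + (D : ℝ≥0∞) ^ (c₁ + 1) := by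
    rw [hC₁def]; push_cast; ring
  have h20CC : 20 * (C : ℝ≥0∞) * (C : ℝ≥0∞) ≤ (C₁ : ℝ≥0∞) := by
    rw [hc₁coe]
    calc 20 * (C : ℝ≥0∞) * (C : ℝ≥0∞) = 20 * (C : ℝ≥0∞) ^ 2 := by ring
    _ ≤ 20 * (C : ℝ≥0∞) ^ 2 + 200 * (C : ℝ≥0∞) + 1 + (D : ℝ≥0∞) ^ (c₁ + 1) := by
        exact le_add_right (le_add_right le_self_add)
  have h100C1 : 100 * (C : ℝ≥0∞) + 1 ≤ (C₁ : ℝ≥0∞) := by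
    rw [hc₁coe]
    have h1 : 100 * (C : ℝ≥0∞) + 1 ≤ 20 * (C : ℝ≥0∞) ^ 2 + 200 * (C : ℝ≥0∞) + 1 := by
      refine add_le_add ?_ le_rfl
      calc 100 * (C : ℝ≥0∞) ≤ 200 * (C : ℝ≥0∞) :=
            mul_le_mul_left (by norm_num) _
      _ ≤ 20 * (C : ℝ≥0∞) ^ 2 + 200 * (C : ℝ≥0∞) := le_add_self
    exact h1.trans (le_add_right le_rfl)
  have h100C : 100 * (C : ℝ≥0∞) ≤ (C₁ : ℝ≥0∞) :=
    le_trans (le_add_right le_rfl : 100 * (C : ℝ≥0∞) ≤ 100 * (C : ℝ≥0∞) + 1) h100C1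
  have hDc₁le : (D : ℝ≥0∞) ^ (c₁ + 1) ≤ (C₁ : ℝ≥0∞) := by
    rw [hc₁coe]; exact le_add_self
  refine ⟨C₁, C₂, hC₁pos, hC₂pos, ?_⟩
  intro t ht
  have key : ∀ A : Set X, MeasurableSet A → μ A ≠ ∞ → (C₂ : ℝ≥0∞) * t ≤ μ A →
      (⨅ (x : X) (r : ℝ) (_ : 0 < r) (_ : t ≤ μ (Metric.ball x r)),
          μ (hBdry (Metric.ball x r) 2)) ≤ (C₁ : ℝ≥0∞) * μ (hBdry A 2) := by
    intro A hAm hAfin hAge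
    have hIball : ∀ (x' : X) (ρ : ℝ), 0 < ρ → t ≤ μ (ball x' ρ) →
        (⨅ (x : X) (r : ℝ) (_ : 0 < r) (_ : t ≤ μ (Metric.ball x r)),
          μ (hBdry (Metric.ball x r) 2)) ≤ μ (hBdry (ball x' ρ) 2) := by
      intro x' ρ h1 h2
      exact iInf_le_of_le x' (iInf_le_of_le ρ (iInf_le_of_le h1 (iInf_le _ h2)))
    have hμA0 : μ A ≠ 0 := by
      intro h
      rw [h] at hAge
      have : (C₂ : ℝ≥0∞) * t = 0 := le_antisymm hAge zero_le
      rcases mul_eq_zero.1 this with h' | h'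
      · exact (by exact_mod_cast hC₂pos.ne' : (C₂ : ℝ≥0∞) ≠ 0) h'
      · exact ht.ne' h'
    have hμApos : 0 < μ A := pos_iff_ne_zero.2 hμA0
    have htμA : t ≤ μ A := le_trans (le_mul_of_one_le_left zero_le hC₂1le) hAge
    have hst := hstrong A hAm hAfin hμApos
    set J := μ (hBdry A 2) with hJdef
    set r₀ := phi μ x₀ ((C : ℝ≥0∞) * μ A) with hr₀def
    by_cases hr0 : ENNReal.ofReal r₀ = 0
    · rw [hr0, ENNReal.div_zero hμA0,
        ENNReal.mul_top (ENNReal.inv_ne_zero.2 hCnetop)] at hst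
      rw [top_le_iff.1 hst, ENNReal.mul_top hC₁0]
      exact le_top
    · have hr₀pos : 0 < r₀ := by
        rcases le_or_gt r₀ 0 with h | h
        · exact absurd (ENNReal.ofReal_eq_zero.2 h) hr0
        · exact h
      have hSbdd : BddBelow {r : ℝ | 0 < r ∧ (C : ℝ≥0∞) * μ A ≤ μ (ball x₀ r)} :=
        ⟨0, fun r hr => hr.1.le⟩
      have hSne : {r : ℝ | 0 < r ∧ (C : ℝ≥0∞) * μ A ≤ μ (ball x₀ r)}.Nonempty := by
        by_contra h
        rw [Set.not_nonempty_iff_eq_empty] at h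
        have : r₀ = 0 := by rw [hr₀def]; simp only [phi]; rw [h, Real.sInf_empty]
        linarith
      have F1 : ∀ s : ℝ, r₀ < s → (C : ℝ≥0∞) * μ A ≤ μ (ball x₀ s) := by
        intro s hs
        have hs' : sInf {r : ℝ | 0 < r ∧ (C : ℝ≥0∞) * μ A ≤ μ (ball x₀ r)} < s := by
          rw [hr₀def] at hs; simpa only [phi] using hs
        obtain ⟨u, hu, hus⟩ := exists_lt_of_csInf_lt hSne hs'
        exact hu.2.trans (measure_mono (ball_subset_ball hus.le))
      have F2 : ∀ s : ℝ, 0 < s → s < r₀ → μ (ball x₀ s) < (C : ℝ≥0∞) * μ A := by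
        intro s h1 h2
        by_contra h
        push_neg at h
        have hmem := csInf_le hSbdd (⟨h1, h⟩ :
          s ∈ {r : ℝ | 0 < r ∧ (C : ℝ≥0∞) * μ A ≤ μ (ball x₀ r)})
        have : r₀ ≤ s := by rw [hr₀def]; simpa only [phi] using hmem
        linarith
      have hμAC : μ A ≤ (C : ℝ≥0∞) * μ A := le_mul_of_one_le_left zero_le hC1le
      have hrearr : μ A ≤ ((C : ℝ≥0∞) * J) * ENNReal.ofReal r₀ := by
        have h1 : μ A / ENNReal.ofReal r₀ ≤ (C : ℝ≥0∞) * J := by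
          calc μ A / ENNReal.ofReal r₀
              = (C : ℝ≥0∞) * ((C : ℝ≥0∞)⁻¹ * (μ A / ENNReal.ofReal r₀)) := by
                rw [← mul_assoc, ENNReal.mul_inv_cancel hCne0 hCnetop, one_mul]
          _ ≤ (C : ℝ≥0∞) * J := mul_le_mul_right hst _
        calc μ A = μ A / ENNReal.ofReal r₀ * ENNReal.ofReal r₀ :=
              (ENNReal.div_mul_cancel hr0 ofReal_ne_top).symm
        _ ≤ ((C : ℝ≥0∞) * J) * ENNReal.ofReal r₀ := mul_le_mul_left h1 _
      rcases le_or_gt 100 r₀ with hI100 | hII100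
      · -- CASE I : r₀ ≥ 100, pigeonhole on inner annuli
        set N : ℕ := ⌈r₀ / 20⌉₊ with hNdef
        have hNge : r₀ / 20 ≤ (N : ℝ) := Nat.le_ceil _
        have hNle : (N : ℝ) < r₀ / 20 + 1 := Nat.ceil_lt_add_one (by positivity)
        have hN0 : N ≠ 0 := by
          intro h
          rw [h] at hNge
          norm_num at hNge
          linarith
        set ρ : ℕ → ℝ := fun i => r₀ / 2 + 5 * (i : ℝ) + 5 / 2 with hρdef
        have hρpos : ∀ i : ℕ, 0 < ρ i := by
          intro i
          rw [hρdef]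
          have : (0:ℝ) ≤ (i:ℝ) := Nat.cast_nonneg i
          simp only []
          linarith
        have hρub : ∀ i < N, ρ i + 2 ≤ r₀ - 4 := by
          intro i hi
          have hi' : (i : ℝ) + 1 ≤ (N : ℝ) := by exact_mod_cast Nat.succ_le_of_lt hi
          rw [hρdef]
          simp only []
          linarith
        set Sann : ℕ → Set X := fun i => closedBall x₀ (ρ i + 2) \ ball x₀ (ρ i - 2)
          with hSanndef
        have hd1 : μ (ball x₀ (r₀ - 1)) < (C : ℝ≥0∞) * μ A := F2 _ (by linarith) (by linarith)
        have hd2 : (C : ℝ≥0∞) * μ A ≤ μ (ball x₀ (r₀ + 1)) := F1 _ (by linarith)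
        have hwex : ∃ w, w ∈ ball x₀ (r₀ + 1) \ ball x₀ (r₀ - 1) := by
          by_contra h
          push_neg at h
          have hempty : ball x₀ (r₀ + 1) \ ball x₀ (r₀ - 1) = ∅ :=
            Set.eq_empty_iff_forall_notMem.2 fun w hw => h w hw
          have hsub : ball x₀ (r₀ + 1) ⊆ ball x₀ (r₀ - 1) := Set.diff_eq_empty.1 hempty
          exact absurd (hd2.trans (measure_mono hsub)) (not_le.2 hd1)
        obtain ⟨w, hwmem⟩ := hwex
        have hwdist : r₀ - 1 ≤ dist x₀ w := by
          have h2 := hwmem.2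
          rw [mem_ball, not_lt, dist_comm] at h2
          exact h2
        have hwout : ∀ i < N, ρ i ≤ dist x₀ w := by
          intro i hi
          have := hρub i hi
          linarith
        have hbs : ∀ i < N, hBdry (ball x₀ (ρ i)) 2 ⊆ Sann i := by
          intro i hi z hz
          refine ⟨IsoPf.nbhd_ball_sub x₀ (hρpos i) hz.1, ?_⟩
          have hlow := IsoPf.bdry_ball_lower (hwout i hi) hz
          rw [mem_ball, not_lt, dist_comm]
          exact hlow
        have hSm : ∀ i ∈ Finset.range N, MeasurableSet (Sann i) := fun i _ =>
          measurableSet_closedBall.diff measurableSet_ball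
        have hdisj : (↑(Finset.range N) : Set ℕ).PairwiseDisjoint Sann := by
          intro i _ j _ hij
          rw [Function.onFun, Set.disjoint_left]
          intro z hzi hzj
          have h1 : dist z x₀ ≤ ρ i + 2 := by
            have := hzi.1; rwa [mem_closedBall] at this
          have h2 : ρ j - 2 ≤ dist z x₀ := by
            have := hzj.2; rwa [mem_ball, not_lt] at this
          have h3 : dist z x₀ ≤ ρ j + 2 := by
            have := hzj.1; rwa [mem_closedBall] at this
          have h4 : ρ i - 2 ≤ dist z x₀ := by
            have := hzi.2; rwa [mem_ball, not_lt] at this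
          rcases lt_or_gt_of_ne hij with h | h
          · have hij' : (i : ℝ) + 1 ≤ (j : ℝ) := by exact_mod_cast Nat.succ_le_of_lt h
            rw [hρdef] at h1 h2
            simp only [] at h1 h2
            linarith
          · have hij' : (j : ℝ) + 1 ≤ (i : ℝ) := by exact_mod_cast Nat.succ_le_of_lt h
            rw [hρdef] at h3 h4
            simp only [] at h3 h4
            linarith
        have hpig : ∃ i, i < N ∧ μ (Sann i) ≤ ((C : ℝ≥0∞) * μ A) / (N : ℝ≥0∞) := by
          by_contra h
          push_neg at h
          have hlow : ∀ i ∈ Finset.range N, ((C : ℝ≥0∞) * μ A) / (N : ℝ≥0∞) ≤ μ (Sann i) :=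
            fun i hi => (h i (Finset.mem_range.1 hi)).le
          have hcard := Finset.card_nsmul_le_sum (Finset.range N)
            (fun i => μ (Sann i)) (((C : ℝ≥0∞) * μ A) / (N : ℝ≥0∞)) hlow
          rw [Finset.card_range, nsmul_eq_mul] at hcard
          have hNne0 : (N : ℝ≥0∞) ≠ 0 := by exact_mod_cast hN0
          rw [ENNReal.mul_div_cancel hNne0 (ENNReal.natCast_ne_top N)] at hcard
          have hUnion : μ (⋃ i ∈ Finset.range N, Sann i)
              = ∑ i ∈ Finset.range N, μ (Sann i) := measure_biUnion_finset hdisj hSm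
          have hUsub : (⋃ i ∈ Finset.range N, Sann i) ⊆ ball x₀ (r₀ - 1) := by
            refine Set.iUnion₂_subset fun i hi z hz => ?_
            rw [mem_ball]
            have h1 : dist z x₀ ≤ ρ i + 2 := by
              have := hz.1; rwa [mem_closedBall] at this
            have := hρub i (Finset.mem_range.1 hi)
            linarith
          have hSum : ∑ i ∈ Finset.range N, μ (Sann i) ≤ μ (ball x₀ (r₀ - 1)) := by
            rw [← hUnion]; exact measure_mono hUsub
          exact lt_irrefl _ (lt_of_le_of_lt (hcard.trans hSum) hd1)
        obtain ⟨i, hiN, hile⟩ := hpig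
        have hball_t : t ≤ μ (ball x₀ (ρ i)) := by
          have hcs : (C : ℝ≥0∞) * μ A ≤ μ (ball x₀ (2 * r₀)) := F1 _ (by linarith)
          have hcmp : μ (ball x₀ (2 * r₀)) ≤ (D : ℝ≥0∞) ^ 2 * μ (ball x₀ (r₀ / 2)) :=
            IsoPf.dbl_cmp hdbl x₀ (by linarith) 2 (le_of_eq (by ring))
          have hDt : (D : ℝ≥0∞) ^ 2 * t ≤ (D : ℝ≥0∞) ^ 2 * μ (ball x₀ (r₀ / 2)) := by
            calc (D : ℝ≥0∞) ^ 2 * t = (C₂ : ℝ≥0∞) * t := by rw [hC₂def]; push_cast; ring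
            _ ≤ μ A := hAge
            _ ≤ (C : ℝ≥0∞) * μ A := hμAC
            _ ≤ _ := hcs.trans hcmp
          have hD2ne0 : ((D : ℝ≥0∞) ^ 2) ≠ 0 :=
            pow_ne_zero _ (by exact_mod_cast hDpos.ne')
          have hD2net : ((D : ℝ≥0∞) ^ 2) ≠ ⊤ := by
            exact ENNReal.pow_ne_top coe_ne_top
          have h5 := (ENNReal.mul_le_mul_iff_right hD2ne0 hD2net).1 hDt
          refine h5.trans (measure_mono (ball_subset_ball ?_))
          rw [hρdef]
          have : (0:ℝ) ≤ (i:ℝ) := Nat.cast_nonneg i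
          simp only []
          linarith
        refine le_trans (hIball x₀ (ρ i) (hρpos i) hball_t) ?_
        have hb1 : μ (hBdry (ball x₀ (ρ i)) 2) ≤ ((C : ℝ≥0∞) * μ A) / (N : ℝ≥0∞) :=
          le_trans (measure_mono (hbs i hiN)) hile
        have h20 : ENNReal.ofReal r₀ / (N : ℝ≥0∞) ≤ 20 := by
          refine ENNReal.div_le_of_le_mul ?_
          have hr20 : r₀ ≤ 20 * (N : ℝ) := by linarith
          calc ENNReal.ofReal r₀ ≤ ENNReal.ofReal (20 * (N : ℝ)) :=
                ENNReal.ofReal_le_ofReal hr20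
          _ = 20 * (N : ℝ≥0∞) := by
              rw [ENNReal.ofReal_mul (by norm_num : (0:ℝ) ≤ 20), ENNReal.ofReal_natCast]
              norm_num
        calc μ (hBdry (ball x₀ (ρ i)) 2) ≤ ((C : ℝ≥0∞) * μ A) / (N : ℝ≥0∞) := hb1
        _ ≤ ((C : ℝ≥0∞) * (((C : ℝ≥0∞) * J) * ENNReal.ofReal r₀)) / (N : ℝ≥0∞) :=
            ENNReal.div_le_div_right (mul_le_mul_right hrearr _) _
        _ = ((C : ℝ≥0∞) * (C : ℝ≥0∞) * J) * (ENNReal.ofReal r₀ / (N : ℝ≥0∞)) := by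
            rw [div_eq_mul_inv, div_eq_mul_inv]; ring
        _ ≤ ((C : ℝ≥0∞) * (C : ℝ≥0∞) * J) * 20 := mul_le_mul_right h20 _
        _ = (20 * (C : ℝ≥0∞) * (C : ℝ≥0∞)) * J := by ring
        _ ≤ (C₁ : ℝ≥0∞) * J := mul_le_mul_left h20CC _
      · -- CASE II : r₀ < 100
        have hcaseII : μ A ≤ 100 * (C : ℝ≥0∞) * J := by
          calc μ A ≤ ((C : ℝ≥0∞) * J) * ENNReal.ofReal r₀ := hrearr
          _ ≤ ((C : ℝ≥0∞) * J) * 100 := by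
              refine mul_le_mul_right ?_ _
              calc ENNReal.ofReal r₀ ≤ ENNReal.ofReal 100 :=
                    ENNReal.ofReal_le_ofReal hII100.le
              _ = 100 := by norm_num
          _ = 100 * (C : ℝ≥0∞) * J := by ring
        have hm101 : (C : ℝ≥0∞) * μ A ≤ μ (ball x₀ 101) := F1 _ (by linarith)
        by_cases hsmall : ∃ p : X, μ (ball p 2) < t
        · -- CASE II.α : dyadic first-passage ball around p
          obtain ⟨p, hp2⟩ := hsmall
          have hbig : ∃ n : ℕ, t ≤ μ (ball p (2 ^ n * 2)) := by
            obtain ⟨n, hn⟩ := pow_unbounded_of_one_lt (dist x₀ p + 101)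
              (by norm_num : (1 : ℝ) < 2)
            refine ⟨n, ?_⟩
            have hsub : ball x₀ 101 ⊆ ball p (2 ^ n * 2) := by
              intro z hz
              rw [mem_ball] at hz ⊢
              have h3 := dist_triangle z x₀ p
              have h4 : (2 : ℝ) ^ n ≤ 2 ^ n * 2 := by
                nlinarith [pow_pos (by norm_num : (0 : ℝ) < 2) n]
              have h5 : dist z p ≤ dist z x₀ + dist x₀ p := h3
              have h6 : dist x₀ p ≥ 0 := dist_nonneg
              linarith
            exact htμA.trans (hμAC.trans (hm101.trans (measure_mono hsub)))
          obtain ⟨k, hk, hkmin⟩ : ∃ k : ℕ, t ≤ μ (ball p (2 ^ k * 2)) ∧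
              ∀ m : ℕ, m < k → ¬ t ≤ μ (ball p (2 ^ m * 2)) :=
            ⟨Nat.find hbig, Nat.find_spec hbig, fun m hm => Nat.find_min hbig hm⟩
          have hk0 : k ≠ 0 := by
            intro h
            rw [h] at hk
            norm_num at hk
            exact absurd hk (not_le.2 hp2)
          obtain ⟨j, hj⟩ := Nat.exists_eq_succ_of_ne_zero hk0
          have hjlt : μ (ball p ((2:ℝ) ^ j * 2)) < t := not_le.1 (hkmin j (by omega))
          have hBsub : μ (hBdry (ball p ((2:ℝ) ^ k * 2)) 2)
              ≤ (D : ℝ≥0∞) ^ 2 * μ (ball p ((2:ℝ) ^ j * 2)) := by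
            have hpow : (0 : ℝ) < 2 ^ k * 2 := by positivity
            have hsub1 : hBdry (ball p ((2:ℝ) ^ k * 2)) 2 ⊆ closedBall p ((2:ℝ) ^ k * 2 + 2) :=
              fun z hz => IsoPf.nbhd_ball_sub p hpow hz.1
            have hsub2 : closedBall p ((2:ℝ) ^ k * 2 + 2) ⊆ ball p ((2:ℝ) ^ k * 2 + 3) :=
              closedBall_subset_ball (by linarith)
            have hcmp : μ (ball p ((2:ℝ) ^ k * 2 + 3)) ≤ (D : ℝ≥0∞) ^ 2 * μ (ball p ((2:ℝ) ^ j * 2)) := by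
              refine IsoPf.dbl_cmp hdbl p (by positivity) 2 ?_
              rw [hj, pow_succ]
              have h1 : (1 : ℝ) ≤ 2 ^ j := one_le_pow₀ (by norm_num)
              nlinarith
            exact le_trans (measure_mono (hsub1.trans hsub2)) hcmp
          refine le_trans (hIball p ((2:ℝ) ^ k * 2) (by positivity) hk) ?_
          calc μ (hBdry (ball p ((2:ℝ) ^ k * 2)) 2)
              ≤ (D : ℝ≥0∞) ^ 2 * μ (ball p ((2:ℝ) ^ j * 2)) := hBsub
          _ ≤ (D : ℝ≥0∞) ^ 2 * t := mul_le_mul_right hjlt.le _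
          _ = (C₂ : ℝ≥0∞) * t := by rw [hC₂def]; push_cast; ring
          _ ≤ μ A := hAge
          _ ≤ 100 * (C : ℝ≥0∞) * J := hcaseII
          _ ≤ (C₁ : ℝ≥0∞) * J := mul_le_mul_left h100C _
        · push_neg at hsmall
          by_cases hgood : ∃ p ∈ A, ∃ w : X, dist p w ≤ 6 ∧ 5 / 4 < infDist w A
          · -- CASE II.β.1 : a good point of A
            obtain ⟨p, hpA, w, hpw, hw54⟩ := hgood
            have hch := hchain6 p w hpw
            obtain ⟨y, hyS, hy1, hy2⟩ := IsoPf.crossing hb hpA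
              (by linarith : 1 + b < infDist w A) hch
            have hyb : ball y (1 / 2) ⊆ hBdry A 2 :=
              IsoPf.ball_sub_bdry hy1 (by linarith)
            have hyp : dist p y < E₂ := by
              rw [mem_ball] at hyS
              rw [dist_comm]
              exact hyS
            have h9 : μ (ball p 9) ≤ (D : ℝ≥0∞) ^ c₁ * J := by
              have hsub : ball p 9 ⊆ ball y (E₂ + 9) := by
                intro z hz
                rw [mem_ball] at hz ⊢
                have h3 := dist_triangle z p y
                linarith
              have hcmp : μ (ball y (E₂ + 9)) ≤ (D : ℝ≥0∞) ^ c₁ * μ (ball y (1 / 2)) :=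
                IsoPf.dbl_cmp hdbl y (by norm_num) c₁ (by linarith)
              exact le_trans (measure_mono hsub)
                (hcmp.trans (mul_le_mul_right (measure_mono hyb) _))
            refine le_trans (hIball p 9 (by norm_num)
              ((hsmall p).trans (measure_mono (ball_subset_ball (by norm_num))))) ?_
            have hb12 : μ (hBdry (ball p 9) 2) ≤ (D : ℝ≥0∞) * μ (ball p 9) := by
              have hsub1 : hBdry (ball p 9) 2 ⊆ closedBall p 11 := by
                intro z hz
                have h0 := IsoPf.nbhd_ball_sub p (by norm_num : (0:ℝ) < 9) hz.1
                rw [show (9:ℝ) + 2 = 11 by norm_num] at h0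
                exact h0
              have hsub2 : closedBall p 11 ⊆ ball p 12 := closedBall_subset_ball (by norm_num)
              have hcmp := IsoPf.dbl_cmp hdbl p (by norm_num : (0:ℝ) < 9) 1
                (by norm_num : (12:ℝ) ≤ 2 ^ 1 * 9)
              rw [pow_one] at hcmp
              exact le_trans (measure_mono (hsub1.trans hsub2)) hcmp
            calc μ (hBdry (ball p 9) 2) ≤ (D : ℝ≥0∞) * μ (ball p 9) := hb12
            _ ≤ (D : ℝ≥0∞) * ((D : ℝ≥0∞) ^ c₁ * J) := mul_le_mul_right h9 _
            _ = (D : ℝ≥0∞) ^ (c₁ + 1) * J := by rw [pow_succ]; ring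
            _ ≤ (C₁ : ℝ≥0∞) * J := mul_le_mul_left hDc₁le _
          · -- CASE II.β.2 : all points of A are saturated
            push_neg at hgood
            have hAne : A.Nonempty := nonempty_of_measure_ne_zero hμA0
            have hall := IsoPf.bad_global hb hb4 hconn hAne hgood
            have hcsub : Aᶜ ⊆ hBdry A 2 := by
              intro z hz
              rw [IsoPf.mem_hBdry]
              constructor
              · linarith [hall z]
              · rw [infDist_zero_of_mem hz]
                norm_num
            by_cases hAc : μ Aᶜ = ⊤
            · have hJtop : J = ⊤ := top_le_iff.1 (hAc ▸ measure_mono hcsub)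
              rw [hJtop, ENNReal.mul_top hC₁0]
              exact le_top
            · refine le_trans (hIball x₀ 101 (by norm_num)
                (htμA.trans (hμAC.trans hm101))) ?_
              calc μ (hBdry (ball x₀ 101) 2) ≤ μ (univ : Set X) :=
                    measure_mono (subset_univ _)
              _ = μ (A ∪ Aᶜ) := by rw [Set.union_compl_self]
              _ ≤ μ A + μ Aᶜ := measure_union_le _ _
              _ ≤ 100 * (C : ℝ≥0∞) * J + J := add_le_add hcaseII (measure_mono hcsub)
              _ = (100 * (C : ℝ≥0∞) + 1) * J := by ring
              _ ≤ (C₁ : ℝ≥0∞) * J := mul_le_mul_left h100C1 _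
  simp only [profile]
  exact IsoPf.le_mul_iInf hC₁0 hC₁top fun A =>
    IsoPf.le_mul_iInf hC₁0 hC₁top fun hAm =>
      IsoPf.le_mul_iInf hC₁0 hC₁top fun hfin =>
        IsoPf.le_mul_iInf hC₁0 hC₁top fun hge => key A hAm hfin hge
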